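/- Let m ≥ 2 and let n be an integer with (3^{m−1} + 1)/2 + 3^{m−2} + 1 ≤ n ≤ (3^m − 1)/2 (so every feasible partition of n has m parts). Then every feasible partition w_1 ≤ … ≤ w_m of n satisfies R_{m−1} = w_1 + … + w_{m−1} ≤ (3^{m−1} − 1)/2. -/

import Mathlib

/-!
If some weight `w_j` exceeded `2 R_j + 1`, the number `n - 2 R_j - 1` could not be weighed:
putting every weight from `w_j` on with sign `+1` overshoots it by `R_j + 1`, more than the
lighter weights can compensate, while changing the sign of any one of them loses at least
`w_j > 2 R_j + 1`. Hence `2 R_{j+1} + 1 ≤ 3 (2 R_j + 1)`, and `2 R_j + 1 ≤ 3 ^ j` by induction.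
-/

/-- `w 0, w 1, …, w (m-1)` (1-indexed as `w_1 ≤ … ≤ w_m` in the paper) is a
weighing sequence for `n`: a nondecreasing list of `m` positive integers summing
to `n` such that every integer `1 ≤ k ≤ n` can be written as
`k = u_1 w_1 + … + u_m w_m` with each `u_i ∈ {-1, 0, 1}`. -/
def IsWeighingSeq (n m : ℕ) (w : ℕ → ℕ) : Prop :=
  (∀ i, i < m → 0 < w i) ∧
  (∀ i j, i ≤ j → j < m → w i ≤ w j) ∧
  (∑ i ∈ Finset.range m, w i) = n ∧
  ∀ k : ℤ, 1 ≤ k → k ≤ (n : ℤ) →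
    ∃ u : ℕ → ℤ, (∀ i, u i = -1 ∨ u i = 0 ∨ u i = 1) ∧
      k = ∑ i ∈ Finset.range m, u i * (w i : ℤ)

/-- A feasible partition of `n`: a weighing sequence for `n` of minimal length. -/
def IsFeasible (n m : ℕ) (w : ℕ → ℕ) : Prop :=
  IsWeighingSeq n m w ∧ ∀ (m' : ℕ) (w' : ℕ → ℕ), IsWeighingSeq n m' w' → m ≤ m'

open Finset

section SignedSums

variable {ι R : Type*} [CommRing R] [LinearOrder R] [IsStrictOrderedRing R]
  {s : Finset ι} {u w : ι → R}

lemma abs_sum_mul_le_sum (hu : ∀ i ∈ s, |u i| ≤ 1) (hw : ∀ i ∈ s, 0 ≤ w i) :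
    |∑ i ∈ s, u i * w i| ≤ ∑ i ∈ s, w i := by
  refine (abs_sum_le_sum_abs _ _).trans (sum_le_sum fun i hi => ?_)
  rw [abs_mul, abs_of_nonneg (hw i hi)]
  exact mul_le_of_le_one_left (hw i hi) (hu i hi)

lemma sum_mul_le_sum_sub_of_nonpos [DecidableEq ι] (hu : ∀ i ∈ s, u i ≤ 1)
    (hw : ∀ i ∈ s, 0 ≤ w i) {a : ι} (ha : a ∈ s) (hua : u a ≤ 0) :
    ∑ i ∈ s, u i * w i ≤ ∑ i ∈ s, w i - w a := by
  rw [← add_sum_erase s _ ha, ← add_sum_erase s w ha, add_sub_cancel_left]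
  have hrest : ∑ i ∈ s.erase a, u i * w i ≤ ∑ i ∈ s.erase a, w i :=
    sum_le_sum fun i hi =>
      mul_le_of_le_one_left (hw i (mem_of_mem_erase hi)) (hu i (mem_of_mem_erase hi))
  linarith [mul_nonpos_of_nonpos_of_nonneg hua (hw a ha)]

end SignedSums

namespace IsWeighingSeq

variable {n m : ℕ} {w : ℕ → ℕ}

lemma le_two_mul_sum_range_add_one (hw : IsWeighingSeq n m w) {j : ℕ} (hj : j < m) :
    w j ≤ 2 * ∑ i ∈ range j, w i + 1 := by
  obtain ⟨-, hmono, hsum, hrep⟩ := hw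
  by_contra! hgt
  set S : ℤ := ∑ i ∈ range j, (w i : ℤ) with hS
  have hbig : 2 * S + 2 ≤ w j := by rw [hS]; exact_mod_cast hgt
  have hn : (n : ℤ) = S + ∑ i ∈ Ico j m, (w i : ℤ) := by
    rw [sum_range_add_sum_Ico _ hj.le, ← hsum]; push_cast; rfl
  have hwj_le : (w j : ℤ) ≤ ∑ i ∈ Ico j m, (w i : ℤ) :=
    single_le_sum (f := fun i => (w i : ℤ)) (fun i _ => by positivity) (mem_Ico.mpr ⟨le_rfl, hj⟩)
  have hS0 : 0 ≤ S := by positivity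
  obtain ⟨u, hu, hk⟩ := hrep (n - 2 * S - 1) (by linarith) (by linarith)
  rw [← sum_range_add_sum_Ico _ hj.le] at hk
  have hu1 : ∀ i, |u i| ≤ 1 := fun i => by rcases hu i with h | h | h <;> simp [h]
  have hhead := abs_le.mp <|
    abs_sum_mul_le_sum (s := range j) (fun i _ => hu1 i) (fun i _ => Nat.cast_nonneg (w i))
  by_cases hall : ∀ i ∈ Ico j m, u i = 1
  · have htail : ∑ i ∈ Ico j m, u i * (w i : ℤ) = ∑ i ∈ Ico j m, (w i : ℤ) :=
      sum_congr rfl fun i hi => by rw [hall i hi, one_mul]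
    linarith
  · push Not at hall
    obtain ⟨a, ha, hua⟩ := hall
    have hwa : (w j : ℤ) ≤ w a := by
      exact_mod_cast hmono j a (mem_Ico.mp ha).1 (mem_Ico.mp ha).2
    have htail := sum_mul_le_sum_sub_of_nonpos (fun i _ => (abs_le.mp (hu1 i)).2)
      (fun i _ => Nat.cast_nonneg (w i)) ha (by rcases hu a with h | h | h <;> omega)
    linarith

lemma two_mul_sum_range_add_one_le_pow (hw : IsWeighingSeq n m w) {j : ℕ} (hj : j ≤ m) :
    2 * ∑ i ∈ range j, w i + 1 ≤ 3 ^ j := by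
  induction j with
  | zero => simp
  | succ j ih =>
    have hstep := hw.le_two_mul_sum_range_add_one hj
    rw [sum_range_succ, pow_succ]
    linarith [ih (Nat.le_of_succ_le hj)]

end IsWeighingSeq

theorem penultimate_partial_sum_le_in_upper_span_general (m n : ℕ) :
    ∀ w : ℕ → ℕ, IsFeasible n m w →
      2 * (∑ j ∈ Finset.range (m - 1), w j) ≤ 3 ^ (m - 1) - 1 := by
  intro w hw
  have := hw.1.two_mul_sum_range_add_one_le_pow (Nat.sub_le m 1)
  omega

/-- For `m ≥ 2` and `(3^(m-1) + 1)/2 + 3^(m-2) + 1 ≤ n ≤ (3^m - 1)/2`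
(stated doubled), every feasible partition of `n` with `m` parts satisfies
`R_(m-1) ≤ (3^(m-1) - 1) / 2` (stated as `2 * R_(m-1) ≤ 3^(m-1) - 1`). -/
theorem penultimate_partial_sum_le_in_upper_span (m n : ℕ) (hm : 2 ≤ m)
    (h1 : 3 ^ (m - 1) + 2 * 3 ^ (m - 2) + 3 ≤ 2 * n) (h2 : 2 * n ≤ 3 ^ m - 1) :
    ∀ w : ℕ → ℕ, IsFeasible n m w →
      2 * (∑ j ∈ Finset.range (m - 1), w j) ≤ 3 ^ (m - 1) - 1 :=
  penultimate_partial_sum_le_in_upper_span_general m n
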